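/- Let X be a complex Banach space and L(X) the Banach algebra of bounded linear operators on X. Suppose A, D ∈ L(X) have Hirano inverses A^H and D^H. If AB = 0, B D^H = 0 and D^π C B = 0, where D^π = I − D·D^H, then the operator matrix M = [[A, B], [C, D]] has a Hirano inverse in M₂(L(X)). -/

import Mathlib

/-!
In any ring, `a` has a Hirano inverse iff `a - a ^ 3` is nilpotent. Both directions are computed
in the commutative subalgebra generated by `a` (and its Hirano inverse); for the converse, `a ^ 2`
is idempotent modulo the nilradical, the idempotent lifts to some `e`, and
`a e (a ^ 2 e + 1 - e)⁻¹` is the Hirano inverse.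

Split the operator matrix as `P + Q` with `P = !![A, 0; C, D]` and `Q = !![0, B; 0, 0]`. Since
`C B = D D^H C B` and `B D^H = 0`, we get `B D ^ k C B = 0`, hence `Q P ^ k Q = 0` for every `k`:
products `x f(P) y` with `x, y` in the additive group spanned by `ℤ[P] Q ℤ[P]` vanish. As
`Q ^ 2 = Q P Q = 0`, `(P + Q) - (P + Q) ^ 3 = (P - P ^ 3) + U` with such a `U`, and a nilpotent `S`
perturbed by a `U` with `U S ^ j U = 0` stays nilpotent. Finally `P - P ^ 3` is nilpotent, being
lower triangular with diagonal `A - A ^ 3`, `D - D ^ 3`.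
-/

open Finset Matrix

/-- `a` has a Hirano inverse: there exists `z` with `az = za`, `z = zaz`,
and `a^2 - az` nilpotent. -/
def HasHiranoInverse {R : Type*} [Ring R] (a : R) : Prop :=
  ∃ z : R, a * z = z * a ∧ z = z * a * z ∧ IsNilpotent (a ^ 2 - a * z)

/-- `a` has a strongly Drazin inverse: there exists `z` with `az = za`, `z = zaz`,
and `a - az` nilpotent. -/
def HasStronglyDrazinInverse {R : Type*} [Ring R] (a : R) : Prop :=
  ∃ z : R, a * z = z * a ∧ z = z * a * z ∧ IsNilpotent (a - a * z)

section Hirano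

variable {R : Type*}

theorem HasHiranoInverse.map [Ring R] {S F : Type*} [Ring S] [FunLike F R S] [RingHomClass F R S]
    (f : F) {a : R} (h : HasHiranoInverse a) : HasHiranoInverse (f a) := by
  obtain ⟨z, hc, hz, hn⟩ := h
  refine ⟨f z, ?_, ?_, ?_⟩
  · rw [← map_mul, hc, map_mul]
  · rw [← map_mul, ← map_mul, ← hz]
  · simpa only [map_sub, map_mul, map_pow] using hn.map f

theorem CommRing.hasHiranoInverse_iff_isNilpotent_sub_pow_three [CommRing R] {a : R} :
    HasHiranoInverse a ↔ IsNilpotent (a - a ^ 3) := by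
  constructor
  · rintro ⟨z, -, hz, hn⟩
    have he : a * z * (a * z) = a * z := by linear_combination -a * hz
    have h₁ : IsNilpotent (a * (1 - a * z)) := by
      have : (a * (1 - a * z)) ^ 2 = (a ^ 2 - a * z) * (1 - a * z) := by
        linear_combination (a ^ 2 - 1) * he
      exact (IsNilpotent.pow_iff_pos two_ne_zero).1
        (this ▸ (Commute.all _ _).isNilpotent_mul_right hn)
    have h₂ : IsNilpotent (a * (a ^ 2 - a * z)) := (Commute.all _ _).isNilpotent_mul_left hn
    convert (Commute.all _ _).isNilpotent_sub h₁ h₂ using 1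
    ring
  · intro h
    have hb : IsNilpotent (a ^ 2 * a ^ 2 - a ^ 2) := by
      convert ((Commute.all _ _).isNilpotent_mul_left (x := -a) h) using 1; ring
    obtain ⟨e, he, hbe⟩ := exists_isIdempotentElem_eq_of_ker_isNilpotent
      (Ideal.Quotient.mk (nilradical R)) (by simp [Ideal.mk_ker, mem_nilradical])
      (Ideal.Quotient.mk _ (a ^ 2)) (Set.mem_range_self _)
      (by rwa [IsIdempotentElem, ← map_mul, Ideal.Quotient.eq, mem_nilradical])
    rw [Ideal.Quotient.eq, mem_nilradical] at hbe
    obtain ⟨v, hv⟩ := ((Commute.all _ _).isNilpotent_mul_left (x := e) hbe).isUnit_one_sub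
      |>.exists_right_inv
    have hav : a * (a * e * v) = e := by
      linear_combination e * hv + (v * (1 + e) - a ^ 2 * v) * he.eq
    refine ⟨a * e * v, by ring, ?_, ?_⟩
    · linear_combination -(a * e * v) * hav - a * v * he.eq
    · rw [hav, ← neg_sub]
      exact hbe.neg

open scoped IsMulCommutative in
theorem hasHiranoInverse_iff_isNilpotent_sub_pow_three [Ring R] {a : R} :
    HasHiranoInverse a ↔ IsNilpotent (a - a ^ 3) := by
  constructor
  · rintro ⟨z, hc, hz, hn⟩
    let S := Algebra.adjoin ℤ {a, z}
    have : IsMulCommutative S := Algebra.isMulCommutative_adjoin ℤ <| by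
      rintro x (rfl | rfl) y (rfl | rfl) <;> first | rfl | exact hc | exact hc.symm
    let a' : S := ⟨a, Algebra.subset_adjoin (by simp)⟩
    let z' : S := ⟨z, Algebra.subset_adjoin (by simp)⟩
    have h' : HasHiranoInverse a' := ⟨z', Subtype.ext hc, Subtype.ext hz,
      (IsNilpotent.map_iff (f := S.val) Subtype.val_injective).1 hn⟩
    exact CommRing.hasHiranoInverse_iff_isNilpotent_sub_pow_three.1 h' |>.map S.val
  · intro h
    let S := Algebra.adjoin ℤ {a}
    let a' : S := ⟨a, Algebra.self_mem_adjoin_singleton ℤ a⟩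
    have h' : IsNilpotent (a' - a' ^ 3) :=
      (IsNilpotent.map_iff (f := S.val) Subtype.val_injective).1 h
    exact (CommRing.hasHiranoInverse_iff_isNilpotent_sub_pow_three.2 h').map S.val

end Hirano

section

variable {R : Type*} [Ring R]

theorem add_pow_succ_of_mul_pow_mul_eq_zero {S U : R} (hU : ∀ j, U * S ^ j * U = 0) (k : ℕ) :
    (S + U) ^ (k + 1) = S ^ (k + 1) + ∑ p ∈ antidiagonal k, S ^ p.1 * U * S ^ p.2 := by
  induction k with
  | zero => simp
  | succ k ih =>
    have hvanish : (∑ p ∈ antidiagonal k, S ^ p.1 * U * S ^ p.2) * U = 0 := by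
      rw [Finset.sum_mul]
      exact Finset.sum_eq_zero fun p _ ↦ by
        rw [mul_assoc, mul_assoc, ← mul_assoc U, hU, mul_zero]
    rw [pow_succ, ih, Finset.Nat.sum_antidiagonal_succ', add_mul, mul_add, mul_add, hvanish,
      Finset.sum_mul]
    simp only [pow_succ, mul_assoc, pow_zero, mul_one]
    abel

theorem isNilpotent_add_of_mul_pow_mul_eq_zero {S U : R} (hS : IsNilpotent S)
    (hU : ∀ j, U * S ^ j * U = 0) : IsNilpotent (S + U) := by
  obtain ⟨s, hs⟩ := hS
  have hpow : ∀ j, s ≤ j → S ^ j = 0 := fun j hj ↦ pow_eq_zero_of_le hj hs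
  refine ⟨2 * s + 1, ?_⟩
  rw [add_pow_succ_of_mul_pow_mul_eq_zero hU, hpow _ (by omega), zero_add]
  refine Finset.sum_eq_zero fun p hp ↦ ?_
  rw [HasAntidiagonal.mem_antidiagonal] at hp
  rcases le_total s p.1 with h | h
  · rw [hpow _ h, zero_mul, zero_mul]
  · rw [hpow p.2 (by omega), mul_zero]

section Sandwich

variable {P Q : R}

theorem mul_mul_eq_zero_of_mem_adjoin (hPQ : ∀ k, Q * P ^ k * Q = 0) {y : R}
    (hy : y ∈ Algebra.adjoin ℤ {P}) : Q * y * Q = 0 := by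
  rw [← Subalgebra.mem_toSubmodule, Algebra.adjoin_eq_span, ← Submonoid.powers_eq_closure] at hy
  induction hy using Submodule.span_induction with
  | mem y hy => obtain ⟨k, rfl⟩ := hy; exact hPQ k
  | zero => simp
  | add y y' _ _ h h' => rw [mul_add, add_mul, h, h', add_zero]
  | smul c y _ h => rw [mul_smul_comm, smul_mul_assoc, h, smul_zero]

theorem mul_mul_eq_zero_of_mem_closure (hPQ : ∀ k, Q * P ^ k * Q = 0) {x y z : R}
    (hx : x ∈ AddSubgroup.closure
      (Set.image2 (· * Q * ·) (Algebra.adjoin ℤ {P}) (Algebra.adjoin ℤ {P})))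
    (hy : y ∈ AddSubgroup.closure
      (Set.image2 (· * Q * ·) (Algebra.adjoin ℤ {P}) (Algebra.adjoin ℤ {P})))
    (hz : z ∈ Algebra.adjoin ℤ {P}) : x * z * y = 0 := by
  induction hx using AddSubgroup.closure_induction with
  | mem x hx =>
    obtain ⟨a, ha, b, hb, rfl⟩ := hx
    induction hy using AddSubgroup.closure_induction with
    | mem y hy =>
      obtain ⟨c, hc, d, hd, rfl⟩ := hy
      have hbzc : b * z * c ∈ Algebra.adjoin ℤ {P} := mul_mem (mul_mem hb hz) hc
      calc a * Q * b * z * (c * Q * d) = a * (Q * (b * z * c) * Q) * d := by noncomm_ring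
        _ = 0 := by rw [mul_mul_eq_zero_of_mem_adjoin hPQ hbzc, mul_zero, zero_mul]
    | zero => simp
    | add y y' _ _ h h' => rw [mul_add, h, h', add_zero]
    | neg y _ h => rw [mul_neg, h, neg_zero]
  | zero => simp
  | add x x' _ _ h h' => rw [add_mul, add_mul, h, h', add_zero]
  | neg x _ h => rw [neg_mul, neg_mul, h, neg_zero]

theorem isNilpotent_add_sub_pow_three (hP : IsNilpotent (P - P ^ 3))
    (hPQ : ∀ k, Q * P ^ k * Q = 0) : IsNilpotent ((P + Q) - (P + Q) ^ 3) := by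
  have hPA : P ∈ Algebra.adjoin ℤ {P} := Algebra.self_mem_adjoin_singleton ℤ P
  let J := AddSubgroup.closure (Set.image2 (· * Q * ·) (Algebra.adjoin ℤ {P} : Set R)
    (Algebra.adjoin ℤ {P}))
  have hJ : ∀ a ∈ Algebra.adjoin ℤ {P}, ∀ b ∈ Algebra.adjoin ℤ {P}, a * Q * b ∈ J :=
    fun a ha b hb ↦ AddSubgroup.subset_closure (Set.mem_image2_of_mem ha hb)
  have hU := sub_mem (sub_mem (sub_mem (hJ 1 (one_mem _) 1 (one_mem _))
    (hJ (P ^ 2) (pow_mem hPA 2) 1 (one_mem _))) (hJ P hPA P hPA))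
    (hJ 1 (one_mem _) (P ^ 2) (pow_mem hPA 2))
  simp only [one_mul, mul_one] at hU
  have hQQ : Q * Q = 0 := by simpa using hPQ 0
  have hQPQ : Q * P * Q = 0 := by simpa using hPQ 1
  have hdecomp :
      (P + Q) - (P + Q) ^ 3 = (P - P ^ 3) + (Q - P ^ 2 * Q - P * Q * P - Q * P ^ 2) := by
    have : (P + Q) - (P + Q) ^ 3 = (P - P ^ 3) + (Q - P ^ 2 * Q - P * Q * P - Q * P ^ 2)
        - (P * (Q * Q) + Q * P * Q + Q * Q * P + Q * Q * Q) := by noncomm_ring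
    rw [this, hQQ, hQPQ]
    simp
  rw [hdecomp]
  exact isNilpotent_add_of_mul_pow_mul_eq_zero hP fun j ↦
    mul_mul_eq_zero_of_mem_closure hPQ hU hU (pow_mem (sub_mem hPA (pow_mem hPA 3)) j)

end Sandwich

section FinTwo

variable {a b c d : R}

theorem exists_fin_two_lower_pow (a c d : R) (k : ℕ) :
    ∃ y, !![a, 0; c, d] ^ k = !![a ^ k, 0; y, d ^ k] := by
  induction k with
  | zero => exact ⟨0, by simp [one_fin_two]⟩
  | succ k ih =>
    obtain ⟨y, hy⟩ := ih
    exact ⟨y * a + d ^ k * c, by rw [pow_succ, hy, mul_fin_two]; simp [pow_succ]⟩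

theorem isNilpotent_fin_two_lower (ha : IsNilpotent a) (hd : IsNilpotent d) (c : R) :
    IsNilpotent !![a, 0; c, d] := by
  obtain ⟨p, hp⟩ := ha
  obtain ⟨q, hq⟩ := hd
  obtain ⟨y, hy⟩ := exists_fin_two_lower_pow a c d p
  obtain ⟨y', hy'⟩ := exists_fin_two_lower_pow a c d q
  refine ⟨q + p, ?_⟩
  rw [pow_add, hy', hy, hp, hq, mul_fin_two]
  simp [← Matrix.ext_iff, Fin.forall_fin_two]

theorem isNilpotent_fin_two_lower_sub_pow_three (ha : IsNilpotent (a - a ^ 3))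
    (hd : IsNilpotent (d - d ^ 3)) (c : R) :
    IsNilpotent (!![a, 0; c, d] - !![a, 0; c, d] ^ 3) := by
  obtain ⟨y, hy⟩ := exists_fin_two_lower_pow a c d 3
  convert isNilpotent_fin_two_lower ha hd (c - y) using 1
  rw [hy]
  ext i j
  fin_cases i <;> fin_cases j <;> simp

theorem fin_two_lower_pow_succ_mul_upper (hab : a * b = 0) (k : ℕ) :
    !![a, 0; c, d] ^ (k + 1) * !![0, b; 0, 0] = !![0, 0; 0, d ^ k * c * b] := by
  induction k with
  | zero => simp [hab]
  | succ k ih =>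
    rw [pow_succ', mul_assoc, ih, mul_fin_two]
    simp [pow_succ', mul_assoc]

theorem upper_mul_fin_two_lower_pow_mul_upper (hab : a * b = 0)
    (hb : ∀ k, b * d ^ k * c * b = 0) (k : ℕ) :
    !![0, b; 0, 0] * !![a, 0; c, d] ^ k * !![0, b; 0, 0] = 0 := by
  cases k with
  | zero => simp [← Matrix.ext_iff, Fin.forall_fin_two]
  | succ k =>
    rw [mul_assoc, fin_two_lower_pow_succ_mul_upper hab, mul_fin_two]
    simp [← Matrix.ext_iff, Fin.forall_fin_two, ← mul_assoc, hb]

end FinTwo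

theorem mul_pow_mul_mul_eq_zero {B C D DH : R} (hD : D * DH = DH * D) (hB : B * DH = 0)
    (hCB : (1 - D * DH) * C * B = 0) (k : ℕ) : B * D ^ k * C * B = 0 := by
  have hCB' : C * B = D * DH * (C * B) := by
    rw [sub_mul, sub_mul, one_mul, sub_eq_zero] at hCB
    rw [← mul_assoc, ← hCB]
  calc B * D ^ k * C * B = B * D ^ k * (D * DH * (C * B)) := by rw [← hCB', mul_assoc]
    _ = B * (D ^ (k + 1) * DH) * (C * B) := by simp only [pow_succ, mul_assoc]
    _ = B * DH * D ^ (k + 1) * (C * B) := by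
        rw [(Commute.pow_left hD (k + 1)).eq, ← mul_assoc B]
    _ = 0 := by rw [hB, zero_mul, zero_mul]

end

variable {X : Type*} [NormedAddCommGroup X] [NormedSpace ℂ X] [CompleteSpace X]

theorem hirano_matrix_thm37 (A B C D AH DH : X →L[ℂ] X)
    (hAH : A * AH = AH * A ∧ AH = AH * A * AH ∧ IsNilpotent (A ^ 2 - A * AH))
    (hDH : D * DH = DH * D ∧ DH = DH * D * DH ∧ IsNilpotent (D ^ 2 - D * DH))
    (h1 : A * B = 0)
    (h2 : B * DH = 0)
    (h3 : (1 - D * DH) * C * B = 0) :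
    HasHiranoInverse (!![A, B; C, D] : Matrix (Fin 2) (Fin 2) (X →L[ℂ] X)) := by
  have hM : (!![A, B; C, D] : Matrix (Fin 2) (Fin 2) (X →L[ℂ] X)) =
      !![A, 0; C, D] + !![0, B; 0, 0] := by
    ext i j
    fin_cases i <;> fin_cases j <;> simp
  have hA := hasHiranoInverse_iff_isNilpotent_sub_pow_three.1 ⟨AH, hAH⟩
  have hD := hasHiranoInverse_iff_isNilpotent_sub_pow_three.1 ⟨DH, hDH⟩
  rw [hM, hasHiranoInverse_iff_isNilpotent_sub_pow_three]
  exact isNilpotent_add_sub_pow_three (isNilpotent_fin_two_lower_sub_pow_three hA hD C)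
    (upper_mul_fin_two_lower_pow_mul_upper h1 (mul_pow_mul_mul_eq_zero hDH.1 h2 h3))
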